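/- Let u be a utility function assigning a nonnegative real u(S,E) to each subset S of projects and budgeting scenario E, satisfying u(∅,E)=0 and cost consistency (for every E there is k>0 with u({a},E)=k·c(a) for all projects a). Consider E=(A,V,c,l) with A={x_1,x_2,x_3}, c(x_1)=2, c(x_2)=5, c(x_3)=6, l=6, and three voters approving respectively {x_1}, {x_2}, {x_3}. Then {x_3} is the unique feasible bundle maximizing Σ_{i∈V} u(A_i ∩ B, E); and in E'=(A,V,c,l+1)=(A,V,c,7) (note no project costs exactly 7), the unique sum-optimal feasible bundle is {x_1,x_2}, which does not contain x_3. Consequently, every budgeting method that always returns a sum-optimal feasible bundle (with respect to u) violates limit monotonicity. -/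
import Mathlib


open Finset

/-- A participatory budgeting scenario `E = (A, V, c, l)`. -/
structure Scenario (α ι : Type*) [DecidableEq α] where
  projects : Finset α
  voters : Finset ι
  voters_nonempty : voters.Nonempty
  cost : α → ℕ
  budget : ℕ
  approval : ι → Finset α
  approval_subset : ∀ i ∈ voters, approval i ⊆ projects
  approval_feasible : ∀ i ∈ voters, ∑ a ∈ approval i, cost a ≤ budget

variable {α ι : Type*} [DecidableEq α]

/-- A bundle is feasible if it consists of projects and fits in the budget. -/
def Feasible (E : Scenario α ι) (B : Finset α) : Prop :=
  B ⊆ E.projects ∧ ∑ a ∈ B, E.cost a ≤ E.budget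

/-- The sum over all voters of the satisfaction `u (Aᵢ ∩ B)`. -/
noncomputable def sumScore (E : Scenario α ι) (u : Finset α → ℝ) (B : Finset α) : ℝ :=
  ∑ i ∈ E.voters, u (E.approval i ∩ B)

/-- A feasible bundle maximizing the sum of voters' satisfactions. -/
def IsSumOptimal (E : Scenario α ι) (u : Finset α → ℝ) (B : Finset α) : Prop :=
  Feasible E B ∧ ∀ C, Feasible E C → sumScore E u C ≤ sumScore E u B

/-- A budgeting method `r` satisfies limit monotonicity if, whenever the budget limit is
increased by `1` (and no project costs exactly the new limit), every funded project
remains funded. -/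
def LimitMonotone (r : Scenario α ι → Finset α) : Prop :=
  ∀ E E' : Scenario α ι,
    E'.projects = E.projects → E'.voters = E.voters → E'.cost = E.cost →
    E'.approval = E.approval → E'.budget = E.budget + 1 →
    (∀ a ∈ E.projects, E.cost a ≠ E.budget + 1) →
    r E ⊆ r E'

/-- The scenario `E`: projects `x₁ = 0`, `x₂ = 1`, `x₃ = 2` of costs `2, 5, 6`,
budget `6`, three voters approving `{x₁}`, `{x₂}`, `{x₃}` respectively. -/
def Elim : Scenario (Fin 3) (Fin 3) where
  projects := {0, 1, 2}
  voters := Finset.univ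
  voters_nonempty := ⟨0, Finset.mem_univ 0⟩
  cost := ![2, 5, 6]
  budget := 6
  approval := fun i => {i}
  approval_subset := by decide
  approval_feasible := by decide

/-- The scenario `E'`: as `E`, with budget limit `7` instead of `6`. -/
def Elim' : Scenario (Fin 3) (Fin 3) where
  projects := {0, 1, 2}
  voters := Finset.univ
  voters_nonempty := ⟨0, Finset.mem_univ 0⟩
  cost := ![2, 5, 6]
  budget := 7
  approval := fun i => {i}
  approval_subset := by decide
  approval_feasible := by decide

/-- For any utility function with `u(∅,E) = 0`, nonnegativity and cost consistency:
`{x₃}` is the unique sum-optimal bundle of `E`; no project costs exactly `7`; the unique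
sum-optimal bundle of `E' = (A,V,c,7)` is `{x₁, x₂}`, which does not contain `x₃`;
consequently every budgeting method always returning a sum-optimal feasible bundle
violates limit monotonicity. -/
theorem sum_rule_violates_limit_monotonicity
    (u : Scenario (Fin 3) (Fin 3) → Finset (Fin 3) → ℝ)
    (hzero : ∀ E, u E ∅ = 0)
    (hnonneg : ∀ E S, 0 ≤ u E S)
    (hcc : ∀ E : Scenario (Fin 3) (Fin 3),
      ∃ k : ℝ, 0 < k ∧ ∀ a ∈ E.projects, u E {a} = k * E.cost a) :
    (IsSumOptimal Elim (u Elim) {2} ∧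
      ∀ B, IsSumOptimal Elim (u Elim) B → B = {2}) ∧
    (∀ a ∈ Elim.projects, Elim.cost a ≠ 7) ∧
    (IsSumOptimal Elim' (u Elim') {0, 1} ∧
      (∀ B, IsSumOptimal Elim' (u Elim') B → B = {0, 1}) ∧
      (∀ B, IsSumOptimal Elim' (u Elim') B → (2 : Fin 3) ∉ B)) ∧
    (∀ r : Scenario (Fin 3) (Fin 3) → Finset (Fin 3),
      (∀ F, IsSumOptimal F (u F) (r F)) → ¬ LimitMonotone r) := by
  obtain ⟨k, hk, hks⟩ := hcc Elim
  obtain ⟨k', hk', hks'⟩ := hcc Elim'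
  have hall : ∀ a : Fin 3, a ∈ ({0,1,2} : Finset (Fin 3)) := by decide
  have score : ∀ (B : Finset (Fin 3)),
      sumScore Elim (u Elim) B = k * ((∑ a ∈ B, Elim.cost a : ℕ) : ℝ) := by
    intro B
    have h : sumScore Elim (u Elim) B
        = ∑ i ∈ Finset.univ, (if i ∈ B then u Elim {i} else 0) := by
      unfold sumScore
      refine Finset.sum_congr rfl ?_
      intro i _
      show u Elim ({i} ∩ B) = _
      by_cases h : i ∈ B
      · rw [Finset.singleton_inter_of_mem h, if_pos h]
      · rw [Finset.singleton_inter_of_notMem h, if_neg h, hzero]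
    rw [h, Finset.sum_ite_mem, Finset.univ_inter, Nat.cast_sum,
      Finset.mul_sum]
    refine Finset.sum_congr rfl ?_
    intro a _
    exact hks a (hall a)
  have score' : ∀ (B : Finset (Fin 3)),
      sumScore Elim' (u Elim') B = k' * ((∑ a ∈ B, Elim'.cost a : ℕ) : ℝ) := by
    intro B
    have h : sumScore Elim' (u Elim') B
        = ∑ i ∈ Finset.univ, (if i ∈ B then u Elim' {i} else 0) := by
      unfold sumScore
      refine Finset.sum_congr rfl ?_
      intro i _
      show u Elim' ({i} ∩ B) = _
      by_cases h : i ∈ B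
      · rw [Finset.singleton_inter_of_mem h, if_pos h]
      · rw [Finset.singleton_inter_of_notMem h, if_neg h, hzero]
    rw [h, Finset.sum_ite_mem, Finset.univ_inter, Nat.cast_sum,
      Finset.mul_sum]
    refine Finset.sum_congr rfl ?_
    intro a _
    exact hks' a (hall a)
  have hc2 : (∑ a ∈ ({2} : Finset (Fin 3)), Elim.cost a) = 6 := by decide
  have hc01 : (∑ a ∈ ({0,1} : Finset (Fin 3)), Elim'.cost a) = 7 := by decide
  have hopt : IsSumOptimal Elim (u Elim) {2} := by
    refine ⟨⟨by decide, by decide⟩, ?_⟩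
    intro C hC
    rw [score, score, hc2]
    have hle : ((∑ a ∈ C, Elim.cost a : ℕ) : ℝ) ≤ ((6 : ℕ) : ℝ) := by
      exact_mod_cast hC.2
    exact mul_le_mul_of_nonneg_left hle hk.le
  have huniq : ∀ B, IsSumOptimal Elim (u Elim) B → B = {2} := by
    intro B hB
    have h6 := hB.2 {2} ⟨by decide, by decide⟩
    rw [score, score, hc2] at h6
    have hle : ((6:ℕ):ℝ) ≤ ((∑ a ∈ B, Elim.cost a : ℕ) : ℝ) :=
      le_of_mul_le_mul_left h6 hk
    have h1 : (6:ℕ) ≤ ∑ a ∈ B, Elim.cost a := by exact_mod_cast hle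
    have h2 : ∑ a ∈ B, Elim.cost a ≤ 6 := hB.1.2
    have heq : ∑ a ∈ B, Elim.cost a = 6 := le_antisymm h2 h1
    have key : ∀ C : Finset (Fin 3), ∑ a ∈ C, Elim.cost a = 6 → C = {2} := by decide
    exact key B heq
  have hopt' : IsSumOptimal Elim' (u Elim') {0,1} := by
    refine ⟨⟨by decide, by decide⟩, ?_⟩
    intro C hC
    rw [score', score', hc01]
    have hle : ((∑ a ∈ C, Elim'.cost a : ℕ) : ℝ) ≤ ((7 : ℕ) : ℝ) := by
      exact_mod_cast hC.2
    exact mul_le_mul_of_nonneg_left hle hk'.le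
  have huniq' : ∀ B, IsSumOptimal Elim' (u Elim') B → B = {0,1} := by
    intro B hB
    have h7 := hB.2 {0,1} ⟨by decide, by decide⟩
    rw [score', score', hc01] at h7
    have hle : ((7:ℕ):ℝ) ≤ ((∑ a ∈ B, Elim'.cost a : ℕ) : ℝ) :=
      le_of_mul_le_mul_left h7 hk'
    have h1 : (7:ℕ) ≤ ∑ a ∈ B, Elim'.cost a := by exact_mod_cast hle
    have h2 : ∑ a ∈ B, Elim'.cost a ≤ 7 := hB.1.2
    have heq : ∑ a ∈ B, Elim'.cost a = 7 := le_antisymm h2 h1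
    have key : ∀ C : Finset (Fin 3), ∑ a ∈ C, Elim'.cost a = 7 → C = {0,1} := by decide
    exact key B heq
  refine ⟨⟨hopt, huniq⟩, by decide, ⟨hopt', huniq', ?_⟩, ?_⟩
  · intro B hB
    rw [huniq' B hB]
    decide
  · intro r hr hmono
    have h1 : r Elim = {2} := huniq _ (hr Elim)
    have h2 : r Elim' = {0,1} := huniq' _ (hr Elim')
    have hsub := hmono Elim Elim' rfl rfl rfl rfl rfl (by decide)
    rw [h1, h2] at hsub
    exact absurd (hsub (Finset.mem_singleton_self 2)) (by decide)
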